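/- Let ν be a probability measure on [0,∞) with ν({0}) = 0 and mean 1/α for some α > 0, and let ξ be a finite nonnegative measure on [0,∞) with ξ({0}) = 0 and first moment w = ⟨χ,ξ⟩ ∈ (0,∞). Define the fluid model paths σ(t) and μ(t) as in the gated processor sharing fluid model. Then for all t ≥ 0, ⟨χ, σ(t)⟩ + ⟨χ, μ(t)⟩ = w; i.e., the total fluid workload is constant. -/

import Mathlib

/-!
The mean of `ζ(· +₀ x)` is `⟨χ, ζ⟩ - F_ζ(x)`, because `(y - x)⁺ = y - min y x`. As `F_ζ` is
continuous, nonpositive at `0` and tends to `⟨χ, ζ⟩`, the generalized inverse is a true right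
inverse on `[0, ⟨χ, ζ⟩)`, so shifting by `F⁻¹_ζ(s)` leaves workload `⟨χ, ζ⟩ - s`. In both regimes
`σ` is such a shift at a time `s ∈ [0, w)` of a measure of mean `w` (`ξ`, resp. `α w ν`), while
`μ = α s ν` carries workload `s`.
-/

open MeasureTheory

/-- `F_ζ(x) = ∫ min(y,x) dζ(y)`. -/
noncomputable def Fz (ζ : Measure ℝ) (x : ℝ) : ℝ := ∫ y, min y x ∂ζ

/-- The supremum `x*` of the support of `ζ`. -/
noncomputable def xstar (ζ : Measure ℝ) : ℝ := sInf {x : ℝ | ζ (Set.Ioi x) = 0}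

/-- The generalized inverse `F⁻¹_ζ`. -/
noncomputable def Finv (ζ : Measure ℝ) (t : ℝ) : ℝ :=
  if t < ∫ y, y ∂ζ then sInf {x : ℝ | 0 ≤ x ∧ t ≤ Fz ζ x} else xstar ζ

/-- `ζ(· +₀ x)`: shift `ζ` left by `x` and remove all mass at or below zero. -/
noncomputable def shiftz (ζ : Measure ℝ) (x : ℝ) : Measure ℝ :=
  (ζ.restrict (Set.Ioi x)).map (fun y => y - x)

/-- `⟦t⟧_w = t - ⌊t/w⌋ w`, the residue of `t` modulo `w`. -/
noncomputable def res (w t : ℝ) : ℝ := t - (⌊t / w⌋ : ℝ) * w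

/-- The shifting path `σ(t)` of the gated processor sharing fluid model. -/
noncomputable def sigmaf (α w : ℝ) (ν ξ : Measure ℝ) (t : ℝ) : Measure ℝ :=
  if t < w then shiftz ξ (Finv ξ t)
  else shiftz (ENNReal.ofReal (α * w) • ν) (Finv (ENNReal.ofReal (α * w) • ν) (res w t))

/-- The growing path `μ(t) = α ⟦t⟧_w ν` of the gated processor sharing fluid model. -/
noncomputable def muf (α w : ℝ) (ν : Measure ℝ) (t : ℝ) : Measure ℝ :=
  ENNReal.ofReal (α * res w t) • ν

open Filter Set Topology

lemma Fz_zero_nonpos (ζ : Measure ℝ) : Fz ζ 0 ≤ 0 :=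
  integral_nonpos fun y => min_le_right y 0

section Fz

variable {ζ : Measure ℝ} [IsFiniteMeasure ζ]

lemma integrable_min_const (hint : Integrable id ζ) (x : ℝ) : Integrable (fun y => min y x) ζ :=
  hint.inf (integrable_const x)

lemma lipschitzWith_Fz (hint : Integrable id ζ) : LipschitzWith (ζ univ).toNNReal (Fz ζ) := by
  refine LipschitzWith.of_dist_le_mul fun a b => ?_
  have hbound : ∀ᵐ y ∂ζ, ‖min y a - min y b‖ ≤ |a - b| :=
    ae_of_all _ fun y => by simpa using abs_min_sub_min_le_max y a y b
  rw [Real.dist_eq, Real.dist_eq, Fz, Fz,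
    ← integral_sub (integrable_min_const hint a) (integrable_min_const hint b), mul_comm]
  exact norm_integral_le_of_norm_le_const hbound

lemma tendsto_Fz_atTop (hint : Integrable id ζ) : Tendsto (Fz ζ) atTop (𝓝 (∫ y, y ∂ζ)) := by
  refine tendsto_integral_filter_of_dominated_convergence (fun y => |y|)
    (.of_forall fun x => (integrable_min_const hint x).aestronglyMeasurable) ?_ hint.abs
    (ae_of_all _ fun y => tendsto_const_nhds.congr' ?_)
  · filter_upwards [eventually_ge_atTop 0] with x hx
    refine ae_of_all _ fun y => ?_
    rcases le_total y x with hyx | hxy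
    · simp [min_eq_left hyx]
    · rw [min_eq_right hxy, Real.norm_of_nonneg hx]
      exact hxy.trans (le_abs_self y)
  · filter_upwards [eventually_ge_atTop y] with x hx
    exact (min_eq_left hx).symm

lemma Fz_Finv {s : ℝ} (hs : 0 ≤ s) (hsζ : s < ∫ y, y ∂ζ) : Fz ζ (Finv ζ s) = s := by
  have hint : Integrable id ζ := Integrable.of_integral_ne_zero (f := fun y => y) (by linarith)
  have hcont := (lipschitzWith_Fz hint).continuous
  set S := {x : ℝ | 0 ≤ x ∧ s ≤ Fz ζ x}
  have hSclosed : IsClosed S := isClosed_Ici.inter (isClosed_Ici.preimage hcont)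
  have hSne : S.Nonempty := by
    obtain ⟨x, hx, hx0⟩ := (((tendsto_Fz_atTop hint).eventually (eventually_ge_nhds hsζ)).and
      (eventually_ge_atTop 0)).exists
    exact ⟨x, hx0, hx⟩
  have hbdd : BddBelow S := ⟨0, fun x hx => hx.1⟩
  obtain ⟨hm0, hsm⟩ : sInf S ∈ S := hSclosed.csInf_mem hSne hbdd
  rw [Finv, if_pos hsζ]
  -- `F_ζ` hits `s` on `[0, sInf S]` by the intermediate value theorem, hence at `sInf S` itself
  obtain ⟨c, ⟨hc0, hcm⟩, hcs⟩ := intermediate_value_Icc hm0 hcont.continuousOn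
    ⟨(Fz_zero_nonpos ζ).trans hs, hsm⟩
  rwa [le_antisymm hcm (csInf_le hbdd ⟨hc0, hcs.ge⟩)] at hcs

lemma integral_id_shiftz (hint : Integrable id ζ) (x : ℝ) :
    ∫ y, y ∂(shiftz ζ x) = (∫ y, y ∂ζ) - Fz ζ x := by
  have hposPart : (Ioi x).indicator (fun y => y - x) = fun y => y - min y x := by
    ext y
    by_cases hy : x < y
    · simp [hy, min_eq_right hy.le]
    · simp [hy, min_eq_left (not_lt.1 hy)]
  rw [shiftz, integral_map (f := fun y => y) (measurable_sub_const x).aemeasurable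
    aestronglyMeasurable_id, ← integral_indicator measurableSet_Ioi, hposPart]
  exact integral_sub hint (integrable_min_const hint x)

lemma integral_id_shiftz_Finv {s : ℝ} (hs : 0 ≤ s) (hsζ : s < ∫ y, y ∂ζ) :
    ∫ y, y ∂(shiftz ζ (Finv ζ s)) = (∫ y, y ∂ζ) - s := by
  have hint : Integrable id ζ := Integrable.of_integral_ne_zero (f := fun y => y) (by linarith)
  rw [integral_id_shiftz hint, Fz_Finv hs hsζ]

end Fz

lemma res_nonneg {w : ℝ} (hw : 0 < w) (t : ℝ) : 0 ≤ res w t :=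
  Int.sub_floor_div_mul_nonneg t hw

lemma res_lt {w : ℝ} (hw : 0 < w) (t : ℝ) : res w t < w :=
  Int.sub_floor_div_mul_lt t hw

lemma res_eq_self {w t : ℝ} (ht : 0 ≤ t) (htw : t < w) : res w t = t := by
  have hw : 0 < w := ht.trans_lt htw
  rw [res, Int.floor_eq_zero_iff.2 ⟨by positivity, (div_lt_one hw).2 htw⟩]
  simp

lemma integral_id_ofReal_mul_smul {α s : ℝ} (hα : 0 < α) {ν : Measure ℝ}
    (hνmean : ∫ y, y ∂ν = 1 / α) (hs : 0 ≤ s) :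
    ∫ y, y ∂(ENNReal.ofReal (α * s) • ν) = s := by
  rw [integral_smul_measure, hνmean, ENNReal.toReal_ofReal (by positivity), smul_eq_mul]
  field_simp

theorem stmt10_general (α : ℝ) (hα : 0 < α) (ν : Measure ℝ) [IsProbabilityMeasure ν]
    (hνmean : ∫ y, y ∂ν = 1 / α)
    (ξ : Measure ℝ) [IsFiniteMeasure ξ]
    (w : ℝ) (hw : w = ∫ y, y ∂ξ) (hwpos : 0 < w)
    (t : ℝ) (ht : 0 ≤ t) :
    (∫ y, y ∂(sigmaf α w ν ξ t)) + (∫ y, y ∂(muf α w ν t)) = w := by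
  have hμ (s : ℝ) (hs : 0 ≤ s) : ∫ y, y ∂(ENNReal.ofReal (α * s) • ν) = s :=
    integral_id_ofReal_mul_smul hα hνmean hs
  rw [sigmaf, muf]
  split_ifs with htw
  · rw [res_eq_self ht htw, integral_id_shiftz_Finv ht (hw ▸ htw), hμ t ht, ← hw]
    ring
  · have : IsFiniteMeasure (ENNReal.ofReal (α * w) • ν) := ν.smul_finite ENNReal.ofReal_ne_top
    rw [integral_id_shiftz_Finv (res_nonneg hwpos t) ((hμ w hwpos.le).symm ▸ res_lt hwpos t),
      hμ w hwpos.le, hμ _ (res_nonneg hwpos t)]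
    ring

theorem stmt10 (α : ℝ) (hα : 0 < α) (ν : Measure ℝ) [IsProbabilityMeasure ν]
    (hν0 : ν {0} = 0) (hνsupp : ν (Set.Iio 0) = 0) (hνint : Integrable id ν)
    (hνmean : ∫ y, y ∂ν = 1 / α)
    (ξ : Measure ℝ) [IsFiniteMeasure ξ]
    (hξ0 : ξ {0} = 0) (hξsupp : ξ (Set.Iio 0) = 0) (hξint : Integrable id ξ)
    (w : ℝ) (hw : w = ∫ y, y ∂ξ) (hwpos : 0 < w)
    (t : ℝ) (ht : 0 ≤ t) :
    (∫ y, y ∂(sigmaf α w ν ξ t)) + (∫ y, y ∂(muf α w ν t)) = w :=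
  stmt10_general α hα ν hνmean ξ w hw hwpos t ht
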